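/- arXiv:0910.5008 — 2 statements merged into one kernel-verified Lean document; each statement's English description precedes it below -/
import Mathlib

section
/- Let A' be a commutative ring, J' ⊆ A' an ideal, B' := A'/J' with quotient map g : A' → B', let f : B → B' be a homomorphism of commutative rings, and let A := B ×_{B'} A' be the fiber product ring with projections pr₁ : A → B and pr₂ : A → A'. Then: (i) pr₁ is surjective and its kernel J consists exactly of the pairs (0, a') with a' ∈ J'; (ii) the image of J under pr₂ equals J'; and (iii) regarding B and A' as A-algebras via pr₁ and pr₂ respectively, the natural ring homomorphism B ⊗_A A' → B' sending b ⊗ a' to f(b)·g(a') is an isomorphism. -/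
open scoped TensorProduct

/-- The fiber product ring `B ×_{B'} A'` of two ring homomorphisms `f : B →+* B'` and
`g : A' →+* B'`, realized as the subring `{(b, a') | f b = g a'}` of `B × A'`. -/
def fiberProd {B A' B' : Type*} [CommRing B] [CommRing A'] [CommRing B']
    (f : B →+* B') (g : A' →+* B') : Subring (B × A') :=
  RingHom.eqLocus (f.comp (RingHom.fst B A')) (g.comp (RingHom.snd B A'))

/-- The first projection `pr₁ : B ×_{B'} A' →+* B`. -/
def fiberProdFst {B A' B' : Type*} [CommRing B] [CommRing A'] [CommRing B']
    (f : B →+* B') (g : A' →+* B') : fiberProd f g →+* B :=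
  (RingHom.fst B A').comp (fiberProd f g).subtype

/-- The second projection `pr₂ : B ×_{B'} A' →+* A'`. -/
def fiberProdSnd {B A' B' : Type*} [CommRing B] [CommRing A'] [CommRing B']
    (f : B →+* B') (g : A' →+* B') : fiberProd f g →+* A' :=
  (RingHom.snd B A').comp (fiberProd f g).subtype

/-! The first projection is surjective because `g` is, and its kernel is `0 × ker g`.
The inverse of `b ⊗ a' ↦ f b * g a'` sends `g a'` to `1 ⊗ a'`. It is well defined because
`(0, a') ∈ A` for `a' ∈ ker g`, and it is an inverse because `1 ⊗ a = b ⊗ 1` in `B ⊗_A A'`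
whenever `(b, a) ∈ A`, both sides being `(b, a) • (1 ⊗ 1)`. -/

section

open Function

variable {B A' B' : Type*} [CommRing B] [CommRing A'] [CommRing B'] {f : B →+* B'}
  {g : A' →+* B'}

theorem mem_fiberProd_iff {x : B × A'} : x ∈ fiberProd f g ↔ f x.1 = g x.2 := Iff.rfl

theorem fiberProdFst_surjective (hg : Surjective g) : Surjective (fiberProdFst f g) := fun b =>
  let ⟨a', ha'⟩ := hg (f b)
  ⟨⟨(b, a'), ha'.symm⟩, rfl⟩

theorem zero_mk_mem_fiberProd {a' : A'} (ha' : a' ∈ RingHom.ker g) :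
    (0, a') ∈ fiberProd f g := by
  rw [mem_fiberProd_iff, map_zero, RingHom.mem_ker.mp ha']

theorem mem_ker_fiberProdFst_iff (x : fiberProd f g) :
    x ∈ RingHom.ker (fiberProdFst f g) ↔
      (x : B × A').1 = 0 ∧ (x : B × A').2 ∈ RingHom.ker g := by
  refine ⟨fun hx => ⟨hx, ?_⟩, And.left⟩
  have hx' : (x : B × A').1 = 0 := hx
  rw [RingHom.mem_ker, ← mem_fiberProd_iff.mp x.2, hx', map_zero]

theorem image_ker_fiberProdFst :
    fiberProdSnd f g '' (RingHom.ker (fiberProdFst f g) : Set (fiberProd f g)) =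
      RingHom.ker g := by
  ext a'
  constructor
  · rintro ⟨x, hx, rfl⟩
    exact ((mem_ker_fiberProdFst_iff x).mp hx).2
  · intro ha'
    exact ⟨⟨(0, a'), zero_mk_mem_fiberProd ha'⟩, rfl, rfl⟩

section TensorProduct

local instance : Algebra (fiberProd f g) B := (fiberProdFst f g).toAlgebra
local instance : Algebra (fiberProd f g) A' := (fiberProdSnd f g).toAlgebra
local instance : Algebra (fiberProd f g) B' := (g.comp (fiberProdSnd f g)).toAlgebra

theorem one_tmul_snd_eq_fst_tmul_one (x : fiberProd f g) :
    (1 : B) ⊗ₜ[fiberProd f g] (x : B × A').2 = (x : B × A').1 ⊗ₜ 1 := by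
  have hB : x • (1 : B) = (x : B × A').1 := mul_one _
  have hA' : x • (1 : A') = (x : B × A').2 := mul_one _
  rw [← hB, ← hA', TensorProduct.smul_tmul]

theorem one_tmul_eq_zero_of_mem_ker {a' : A'} (ha' : a' ∈ RingHom.ker g) :
    (1 : B) ⊗ₜ[fiberProd f g] a' = 0 := by
  simpa using one_tmul_snd_eq_fst_tmul_one ⟨(0, a'), zero_mk_mem_fiberProd (f := f) ha'⟩

variable (f g) in
def fiberProdLeftAlgHom : B →ₐ[fiberProd f g] B' :=
  { f with commutes' := fun x => x.2 }

variable (f g) in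
def fiberProdRightAlgHom : A' →ₐ[fiberProd f g] B' :=
  { g with commutes' := fun _ => rfl }

variable (f g) in
def fiberProdTensorToBase : B ⊗[fiberProd f g] A' →ₐ[fiberProd f g] B' :=
  Algebra.TensorProduct.productMap (fiberProdLeftAlgHom f g) (fiberProdRightAlgHom f g)

theorem fiberProdTensorToBase_tmul (b : B) (a' : A') :
    fiberProdTensorToBase f g (b ⊗ₜ a') = f b * g a' :=
  Algebra.TensorProduct.productMap_apply_tmul _ _ b a'

section Surjective

variable (f) (hg : Surjective g)

noncomputable def fiberProdBaseToTensorRingHom : B' →+* B ⊗[fiberProd f g] A' :=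
  g.liftOfSurjective hg
    ⟨(Algebra.TensorProduct.includeRight :
        A' →ₐ[fiberProd f g] B ⊗[fiberProd f g] A').toRingHom,
      fun _ ha' => RingHom.mem_ker.mpr (one_tmul_eq_zero_of_mem_ker ha')⟩

theorem fiberProdBaseToTensorRingHom_apply (a' : A') :
    fiberProdBaseToTensorRingHom f hg (g a') = (1 : B) ⊗ₜ a' :=
  g.liftOfSurjective_comp_apply hg _ a'

noncomputable def fiberProdBaseToTensor :
    B' →ₐ[fiberProd f g] B ⊗[fiberProd f g] A' :=
  { fiberProdBaseToTensorRingHom f hg with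
    commutes' := fun x =>
      (fiberProdBaseToTensorRingHom_apply f hg _).trans (one_tmul_snd_eq_fst_tmul_one x) }

theorem fiberProdBaseToTensor_apply (a' : A') :
    fiberProdBaseToTensor f hg (g a') = (1 : B) ⊗ₜ a' :=
  fiberProdBaseToTensorRingHom_apply f hg a'

noncomputable def fiberProdTensorEquiv : B ⊗[fiberProd f g] A' ≃+* B' :=
  AlgEquiv.toRingEquiv <|
    AlgEquiv.ofAlgHom (fiberProdTensorToBase f g) (fiberProdBaseToTensor f hg)
    (AlgHom.ext <| hg.forall.mpr fun a' => by
      simp [fiberProdBaseToTensor_apply f hg, fiberProdTensorToBase_tmul])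
    (Algebra.TensorProduct.ext
      (AlgHom.ext fun b => by
        obtain ⟨a', ha'⟩ := hg (f b)
        simp [fiberProdTensorToBase_tmul, ← ha', fiberProdBaseToTensor_apply f hg,
          one_tmul_snd_eq_fst_tmul_one ⟨(b, a'), ha'.symm⟩])
      (AlgHom.ext fun a' => by simp [fiberProdTensorToBase_tmul, fiberProdBaseToTensor_apply f hg]))

theorem fiberProdTensorEquiv_tmul (b : B) (a' : A') :
    fiberProdTensorEquiv f hg (b ⊗ₜ a') = f b * g a' :=
  fiberProdTensorToBase_tmul b a'

end Surjective

end TensorProduct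

end

theorem stmt0 {B A' : Type*} [CommRing B] [CommRing A'] (J' : Ideal A')
    (f : B →+* A' ⧸ J') :
    -- (i) `pr₁` is surjective, with kernel exactly the pairs `(0, a')` with `a' ∈ J'`
    Function.Surjective (fiberProdFst f (Ideal.Quotient.mk J')) ∧
    (∀ x : fiberProd f (Ideal.Quotient.mk J'),
      x ∈ RingHom.ker (fiberProdFst f (Ideal.Quotient.mk J')) ↔
        (x : B × A').1 = 0 ∧ (x : B × A').2 ∈ J') ∧
    -- (ii) the image of `J = ker pr₁` under `pr₂` is `J'`
    (⇑(fiberProdSnd f (Ideal.Quotient.mk J')) ''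
        (RingHom.ker (fiberProdFst f (Ideal.Quotient.mk J')) : Set
          (fiberProd f (Ideal.Quotient.mk J'))) = (J' : Set A')) ∧
    -- (iii) the natural map `B ⊗_A A' → B'`, `b ⊗ a' ↦ f(b) · g(a')`, is an isomorphism
    (letI : Algebra (fiberProd f (Ideal.Quotient.mk J')) B :=
        (fiberProdFst f (Ideal.Quotient.mk J')).toAlgebra;
      letI : Algebra (fiberProd f (Ideal.Quotient.mk J')) A' :=
        (fiberProdSnd f (Ideal.Quotient.mk J')).toAlgebra;
      ∃ e : (B ⊗[↥(fiberProd f (Ideal.Quotient.mk J'))] A') ≃+* A' ⧸ J',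
        ∀ (b : B) (a' : A'), e (b ⊗ₜ a') = f b * Ideal.Quotient.mk J' a') := by
  have hmk := Ideal.Quotient.mk_surjective (I := J')
  refine ⟨fiberProdFst_surjective hmk, fun x => ?_, ?_,
    ⟨fiberProdTensorEquiv f hmk, fiberProdTensorEquiv_tmul f hmk⟩⟩
  · rw [mem_ker_fiberProdFst_iff, Ideal.mk_ker]
  · rw [image_ker_fiberProdFst, Ideal.mk_ker]
end

section
/- Let U and U' be sets, R ⊆ U × U and R' ⊆ U' × U' equivalence relations, and f : U' → U a map such that (f × f) maps R' into R. Assume that for each i ∈ {1, 2} the commutative square formed by f × f : R' → R and the i-th projections p'_i : R' → U' and p_i : R → U is cartesian, i.e. the map R' → R ×_{p_i, U, f} U' = {(r, u') ∈ R × U' : p_i(r) = f(u')} sending r' to ((f × f)(r'), p'_i(r')) is a bijection. Then the map U' → (U'/R') ×_{U/R} U sending u' to (the class of u' in U'/R', f(u')) is a bijection, where (U'/R') ×_{U/R} U := {(c, u) ∈ (U'/R') × U : f̄(c) = [u]} and f̄ : U'/R' → U/R is the map induced by f. -/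
theorem stmt10 {U U' : Type*} (r : U → U → Prop) (r' : U' → U' → Prop)
    (hr : Equivalence r) (hr' : Equivalence r') (f : U' → U)
    (hf : ∀ a b : U', r' a b → r (f a) (f b))
    -- the square formed by `f × f` and the first projections is cartesian
    (hcart1 : Function.Bijective (fun q : {p : U' × U' // r' p.1 p.2} =>
      (⟨(⟨(f q.val.1, f q.val.2), hf _ _ q.property⟩, q.val.1),
        rfl⟩ : {x : {p : U × U // r p.1 p.2} × U' // x.1.val.1 = f x.2})))
    -- the square formed by `f × f` and the second projections is cartesian
    (hcart2 : Function.Bijective (fun q : {p : U' × U' // r' p.1 p.2} =>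
      (⟨(⟨(f q.val.1, f q.val.2), hf _ _ q.property⟩, q.val.2),
        rfl⟩ : {x : {p : U × U // r p.1 p.2} × U' // x.1.val.2 = f x.2}))) :
    -- then `U' → (U'/R') ×_{U/R} U` is bijective
    Function.Bijective (fun u' : U' =>
      (⟨(Quot.mk r' u', f u'), rfl⟩ :
        {c : Quot r' × U //
          Quot.lift (fun v => Quot.mk r (f v)) (fun a b h => Quot.sound (hf a b h)) c.1 =
            Quot.mk r c.2})) := by
  constructor
  · intro a b h
    have h1 : Quot.mk r' a = Quot.mk r' b := congrArg (fun x => x.val.1) h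
    have h2 : f a = f b := congrArg (fun x => x.val.2) h
    have hab : r' a b := (Equivalence.eqvGen_iff hr').mp (Quot.eqvGen_exact h1)
    have key := hcart1.injective (a₁ := ⟨(a, b), hab⟩) (a₂ := ⟨(a, a), hr'.refl a⟩)
      (by refine Subtype.ext (Prod.ext (Subtype.ext ?_) rfl); exact Prod.ext rfl h2.symm)
    have := congrArg (fun q => q.val.2) key
    exact this.symm
  · rintro ⟨⟨c, u⟩, hcu⟩
    induction c using Quot.ind with
    | _ v' =>
      have hru : r (f v') u := (Equivalence.eqvGen_iff hr).mp (Quot.eqvGen_exact hcu)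
      obtain ⟨q', hq'⟩ := hcart1.surjective ⟨(⟨(f v', u), hru⟩, v'), rfl⟩
      have e1 : f q'.val.2 = u := congrArg (fun x => x.val.1.val.2) hq'
      have e2 : q'.val.1 = v' := congrArg (fun x => x.val.2) hq'
      refine ⟨q'.val.2, Subtype.ext ?_⟩
      dsimp
      rw [e1]
      congr 1
      exact Quot.sound (hr'.symm (e2 ▸ q'.property))
end
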